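/- Let (X,d) be a compact metric space and f_{0,∞} = {f_n}_{n=0}^∞ a sequence of continuous self-maps of X. Then (X, f_{0,∞}) is topologically exact if and only if the induced system (𝓜(X), f̂_{0,∞}) is topologically exact. -/

import Mathlib

open MeasureTheory Filter

/-- `nacomp f n = f_{n-1} ∘ ⋯ ∘ f_0` (with `nacomp f 0 = id`): the time-`n` map of the
non-autonomous system `(X, f_{0,∞})`. -/
def nacomp {Y : Type*} (f : ℕ → Y → Y) : ℕ → Y → Y
  | 0 => id
  | n + 1 => f n ∘ nacomp f n

/-- The induced pushforward map `f̂` on the space `𝓜(X)` of Borel probability measures,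
equipped with the Lévy–Prokhorov metric. -/
noncomputable def inducedMap {X : Type*} [MetricSpace X] [MeasurableSpace X] [BorelSpace X]
    (f : X → X) (hf : Continuous f) :
    LevyProkhorov (ProbabilityMeasure X) → LevyProkhorov (ProbabilityMeasure X) :=
  fun μ => (LevyProkhorov.toMeasureEquiv (α := ProbabilityMeasure X)).symm
    (((LevyProkhorov.toMeasureEquiv (α := ProbabilityMeasure X)) μ).map hf.measurable.aemeasurable)

/-- Topological exactness of the non-autonomous system given by the maps `f n`. -/
def NAExact {Y : Type*} [TopologicalSpace Y] (f : ℕ → Y → Y) : Prop :=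
  ∃ N, 1 ≤ N ∧ ∀ U : Set Y, IsOpen U → U.Nonempty → ∀ n, N ≤ n → nacomp f n '' U = Set.univ

/-!
Write `g` for a time-`n` map `f_{n-1} ∘ ⋯ ∘ f_0`. Exactness of both systems says that, for
large `n`, `g` (resp. its push-forward `g_*`) maps every nonempty open set onto the whole space.

If `g` does, then every probability measure `ρ` lifts through `g` to a measure carried by any
given closed ball: the measures carried by the ball form a compact set whose `g_*`-image contains,
up to any Lévy–Prokhorov error, the measure obtained by moving the `ρ`-mass of each piece of a fine
partition to a point mass at a `g`-preimage of its centre inside the ball. Redistributing the mass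
of a measure `μ` over such a partition according to these lifts gives a measure close to `μ` that
`g_*` sends to `ρ`; hence the fibres of `g_*` are dense.

Conversely, the measures charging an open set `U` form an open set, so one of them is sent to the
point mass `δ_x`; being carried by `g⁻¹ {x}` and charging `U`, it shows that `U` meets `g⁻¹ {x}`.
-/

open Metric Set Function

section Partition

variable {X : Type*} [MeasurableSpace X]

structure IsMeasurablePartition (E : ℕ → Set X) : Prop where
  measurableSet : ∀ j, MeasurableSet (E j)
  pairwise_disjoint : Pairwise (Disjoint on E)
  iUnion_eq : ⋃ j, E j = univ

theorem IsMeasurablePartition.tsum_measure_inter {E : ℕ → Set X} (hE : IsMeasurablePartition E)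
    (μ : Measure X) {B : Set X} (hB : MeasurableSet B) : ∑' j, μ (B ∩ E j) = μ B := by
  rw [← measure_iUnion (hE.pairwise_disjoint.mono fun i j h => h.mono inter_subset_right
    inter_subset_right) fun j => hB.inter (hE.measurableSet j), ← inter_iUnion, hE.iUnion_eq,
    inter_univ]

theorem exists_isMeasurablePartition_subset_ball [PseudoMetricSpace X] [OpensMeasurableSpace X]
    [TopologicalSpace.SeparableSpace X] [Nonempty X] {δ : ℝ} (hδ : 0 < δ) :
    ∃ (E : ℕ → Set X) (z : ℕ → X), IsMeasurablePartition E ∧ ∀ j, E j ⊆ ball (z j) δ := by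
  obtain ⟨z, hz⟩ := TopologicalSpace.exists_dense_seq X
  refine ⟨disjointed fun j => ball (z j) δ, z, ⟨?_, disjoint_disjointed _, ?_⟩,
    disjointed_subset _⟩
  · exact MeasurableSet.disjointed fun j => measurableSet_ball
  · rw [iUnion_disjointed, eq_univ_iff_forall]
    intro x
    obtain ⟨j, hj⟩ := hz.exists_dist_lt x hδ
    exact mem_iUnion.mpr ⟨j, mem_ball.mpr hj⟩

end Partition

section Redistribute

variable {X Y : Type*} [MeasurableSpace X] [MeasurableSpace Y]

noncomputable def redistribute (μ : Measure X) (E : ℕ → Set X) (ν : ℕ → Measure Y) : Measure Y :=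
  Measure.sum fun j => μ (E j) • ν j

theorem redistribute_apply (μ : Measure X) (E : ℕ → Set X) (ν : ℕ → Measure Y) {B : Set Y}
    (hB : MeasurableSet B) : redistribute μ E ν B = ∑' j, μ (E j) * ν j B := by
  simp only [redistribute, Measure.sum_apply _ hB, Measure.smul_apply, smul_eq_mul]

theorem map_redistribute {Z : Type*} [MeasurableSpace Z] {g : Y → Z} (hg : Measurable g)
    (μ : Measure X) (E : ℕ → Set X) (ν : ℕ → Measure Y) :
    (redistribute μ E ν).map g = redistribute μ E fun j => (ν j).map g := by
  simp only [redistribute, Measure.map_sum hg.aemeasurable, Measure.map_smul]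

variable {E : ℕ → Set X}

theorem IsMeasurablePartition.redistribute_const (hE : IsMeasurablePartition E) (μ : Measure X)
    (ν : Measure Y) :
    redistribute μ E (fun _ => ν) = μ univ • ν := by
  ext B hB
  rw [redistribute_apply _ _ _ hB, ENNReal.tsum_mul_right, Measure.smul_apply, smul_eq_mul]
  simpa using congrArg (· * ν B) (hE.tsum_measure_inter μ MeasurableSet.univ)

theorem IsMeasurablePartition.isProbabilityMeasure_redistribute (hE : IsMeasurablePartition E)
    (μ : Measure X) [IsProbabilityMeasure μ] {ν : ℕ → Measure Y} [∀ j, IsProbabilityMeasure (ν j)] :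
    IsProbabilityMeasure (redistribute μ E ν) := by
  constructor
  simpa [redistribute_apply _ _ _ MeasurableSet.univ] using
    hE.tsum_measure_inter μ MeasurableSet.univ

end Redistribute

section LevyProkhorov

variable {X : Type*} [PseudoMetricSpace X] [MeasurableSpace X] [OpensMeasurableSpace X]

theorem IsMeasurablePartition.levyProkhorovEDist_redistribute_le {E : ℕ → Set X}
    (hE : IsMeasurablePartition E) (μ : Measure X) [IsProbabilityMeasure μ]
    {ν : ℕ → Measure X} [∀ j, IsProbabilityMeasure (ν j)] {r : ℝ}
    (hν : ∀ j, ∀ᵐ y ∂ν j, E j ⊆ ball y r) :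
    levyProkhorovEDist (redistribute μ E ν) μ ≤ ENNReal.ofReal r := by
  have := hE.isProbabilityMeasure_redistribute μ (ν := ν)
  refine levyProkhorovEDist_le_of_forall_le _ _ _ fun ε B hε hε_top hB => ?_
  set T := thickening ε.toReal B
  have hrε : r ≤ ε.toReal := (le_max_left r 0).trans <| by
    rw [← ENNReal.toReal_ofReal']; exact ENNReal.toReal_mono hε_top.ne hε.le
  have hterm : ∀ j, μ (E j) * ν j B ≤ μ (T ∩ E j) := by
    intro j
    by_cases hνB : ν j B = 0
    · simp [hνB]
    obtain ⟨y, hyB, hy⟩ :=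
      Measure.exists_mem_of_measure_ne_zero_of_ae hνB (ae_restrict_of_ae (hν j))
    have hET : E j ⊆ T := fun x hx =>
      mem_thickening_iff.mpr ⟨y, hyB, (mem_ball.mp (hy hx)).trans_le hrε⟩
    rw [inter_eq_right.mpr hET]
    exact mul_le_of_le_one_right' prob_le_one
  calc redistribute μ E ν B = ∑' j, μ (E j) * ν j B := redistribute_apply _ _ _ hB
    _ ≤ ∑' j, μ (T ∩ E j) := ENNReal.tsum_le_tsum hterm
    _ = μ T := hE.tsum_measure_inter μ isOpen_thickening.measurableSet
    _ ≤ μ T + ε := le_self_add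

theorem isOpen_setOf_measure_pos {G : Set X} (hG : IsOpen G) :
    IsOpen {μ : ProbabilityMeasure X | 0 < (μ : Measure X) G} := by
  refine isOpen_iff_mem_nhds.mpr fun P hP => ?_
  filter_upwards [P.toMeasure_add_pos_gt_mem_nhds hG hP] with Q hQ
  exact pos_iff_ne_zero.mpr fun h => by simp [h] at hQ

variable [TopologicalSpace.SeparableSpace X]

theorem mem_closure_of_forall_levyProkhorovEDist_le {A : Set (ProbabilityMeasure X)}
    {μ : ProbabilityMeasure X}
    (h : ∀ δ > 0, ∃ ν ∈ A, levyProkhorovEDist (ν : Measure X) μ ≤ ENNReal.ofReal δ) :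
    μ ∈ closure A := by
  set e := LevyProkhorov.probabilityMeasureHomeomorph (Ω := X)
  rw [← e.injective.mem_set_image, e.image_closure, Metric.mem_closure_iff]
  intro ε hε
  obtain ⟨ν, hνA, hν⟩ := h (ε / 2) (half_pos hε)
  refine ⟨e ν, mem_image_of_mem e hνA, ?_⟩
  rw [dist_comm, LevyProkhorov.dist_probabilityMeasure_def]
  exact (ENNReal.toReal_le_of_le_ofReal (half_pos hε).le hν).trans_lt (half_lt_self hε)

end LevyProkhorov

section Lift

variable {X Y : Type*} [MetricSpace X] [MeasurableSpace X] [BorelSpace X]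
  [MetricSpace Y] [TopologicalSpace.SeparableSpace Y] [MeasurableSpace Y] [BorelSpace Y]

theorem exists_map_eq_of_surjOn [CompactSpace X] {g : X → Y} (hg : Continuous g) {K : Set X}
    (hK : IsClosed K) (hgK : SurjOn g K univ) (ρ : ProbabilityMeasure Y) :
    ∃ μ : ProbabilityMeasure X, (μ : Measure X) Kᶜ = 0 ∧ μ.map hg.aemeasurable = ρ := by
  set S := {μ : ProbabilityMeasure X | (μ : Measure X) Kᶜ = 0}
  have hS : IsCompact S := by
    refine IsClosed.isCompact ?_
    convert (isOpen_setOf_measure_pos hK.isOpen_compl).isClosed_compl using 1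
    ext μ
    simp [S, pos_iff_ne_zero]
  have hA : IsClosed ((fun μ : ProbabilityMeasure X => μ.map hg.aemeasurable) '' S) :=
    (hS.image (ProbabilityMeasure.continuous_map hg)).isClosed
  suffices ρ ∈ closure ((fun μ : ProbabilityMeasure X => μ.map hg.aemeasurable) '' S) by
    rwa [hA.closure_eq] at this
  have := nonempty_of_isProbabilityMeasure (ρ : Measure Y)
  refine mem_closure_of_forall_levyProkhorovEDist_le fun δ hδ => ?_
  obtain ⟨E, z, hE, hEz⟩ := exists_isMeasurablePartition_subset_ball (X := Y) hδ
  choose k hkK hgk using fun j => hgK (mem_univ (z j))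
  have := hE.isProbabilityMeasure_redistribute (ρ : Measure Y) (ν := fun j => Measure.dirac (k j))
  let μ : ProbabilityMeasure X :=
    ⟨redistribute (ρ : Measure Y) E fun j => Measure.dirac (k j), this⟩
  have hμK : (μ : Measure X) Kᶜ = 0 := by
    simp [μ, redistribute_apply _ _ _ hK.isOpen_compl.measurableSet, hkK]
  refine ⟨μ.map hg.aemeasurable, ⟨μ, hμK, rfl⟩, ?_⟩
  have hmap : ((μ.map hg.aemeasurable : ProbabilityMeasure Y) : Measure Y)
      = redistribute (ρ : Measure Y) E fun j => Measure.dirac (z j) := by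
    rw [ProbabilityMeasure.toMeasure_map]
    simp only [μ, ProbabilityMeasure.coe_mk, map_redistribute hg.measurable, Measure.map_dirac,
      hgk]
  have := hE.isProbabilityMeasure_redistribute (ρ : Measure Y) (ν := fun j => Measure.dirac (z j))
  rw [hmap]
  refine hE.levyProkhorovEDist_redistribute_le _ fun j => ?_
  simpa [ae_dirac_eq] using hEz j

end Lift

def SurjOnOpens {X Y : Type*} [TopologicalSpace X] (g : X → Y) : Prop :=
  ∀ U : Set X, IsOpen U → U.Nonempty → g '' U = univ

section Dense

variable {X Y : Type*} [MetricSpace X] [MeasurableSpace X] [BorelSpace X]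
  [MetricSpace Y] [TopologicalSpace.SeparableSpace Y] [MeasurableSpace Y] [BorelSpace Y]

theorem SurjOnOpens.dense_setOf_map_eq [CompactSpace X] {g : X → Y} (hg : Continuous g)
    (hgo : SurjOnOpens g) (ρ : ProbabilityMeasure Y) :
    Dense {μ : ProbabilityMeasure X | μ.map hg.aemeasurable = ρ} := by
  refine fun μ₀ => mem_closure_of_forall_levyProkhorovEDist_le fun δ hδ => ?_
  have := nonempty_of_isProbabilityMeasure (μ₀ : Measure X)
  obtain ⟨E, z, hE, hEz⟩ := exists_isMeasurablePartition_subset_ball (X := X) (half_pos hδ)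
  have hlift : ∀ j, ∃ ν : ProbabilityMeasure X,
      (ν : Measure X) (closedBall (z j) (δ / 2))ᶜ = 0 ∧ ν.map hg.aemeasurable = ρ := by
    intro j
    have hball := hgo (ball (z j) (δ / 2)) isOpen_ball (nonempty_ball.mpr (half_pos hδ))
    refine exists_map_eq_of_surjOn hg isClosed_closedBall (fun y _ => ?_) ρ
    exact image_mono ball_subset_closedBall (hball ▸ mem_univ y)
  choose ν hνz hνρ using hlift
  have := hE.isProbabilityMeasure_redistribute (μ₀ : Measure X) (ν := fun j => (ν j : Measure X))
  let μ : ProbabilityMeasure X := ⟨redistribute (μ₀ : Measure X) E fun j => ν j, this⟩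
  refine ⟨μ, ?_, ?_⟩
  · have hνρ' : ∀ j, (ν j : Measure X).map g = ρ := fun j => by
      rw [← ProbabilityMeasure.toMeasure_map _ hg.aemeasurable, hνρ]
    apply ProbabilityMeasure.toMeasure_injective
    rw [ProbabilityMeasure.toMeasure_map]
    simp only [μ, ProbabilityMeasure.coe_mk, map_redistribute hg.measurable, hνρ',
      hE.redistribute_const, measure_univ, one_smul]
  · refine hE.levyProkhorovEDist_redistribute_le _ fun j => ?_
    filter_upwards [mem_ae_iff.mpr (hνz j)] with y hy x hx
    exact mem_ball.mpr <| calc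
      dist x y ≤ dist x (z j) + dist y (z j) := dist_triangle_right _ _ _
      _ < δ / 2 + δ / 2 := add_lt_add_of_lt_of_le (hEz j hx) hy
      _ = δ := add_halves δ

end Dense

section MapOpens

variable {X Y : Type*} [MetricSpace X] [MeasurableSpace X] [BorelSpace X]
  [MetricSpace Y] [MeasurableSpace Y] [BorelSpace Y]

theorem SurjOnOpens.probabilityMeasure_map [CompactSpace X] [TopologicalSpace.SeparableSpace Y]
    {g : X → Y} (hg : Continuous g) (hgo : SurjOnOpens g) :
    SurjOnOpens fun μ : ProbabilityMeasure X => μ.map hg.aemeasurable := by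
  refine fun U hU hUne => eq_univ_of_forall fun ρ => ?_
  obtain ⟨μ, hμU, hμρ⟩ := (hgo.dense_setOf_map_eq hg ρ).inter_open_nonempty U hU hUne
  exact ⟨μ, hμU, hμρ⟩

theorem SurjOnOpens.of_probabilityMeasure_map {g : X → Y} (hg : Continuous g)
    (h : SurjOnOpens fun μ : ProbabilityMeasure X => μ.map hg.aemeasurable) :
    SurjOnOpens g := by
  rintro U hU ⟨x₀, hx₀⟩
  refine eq_univ_of_forall fun y => ?_
  have hdirac := h {μ | 0 < (μ : Measure X) U} (isOpen_setOf_measure_pos hU)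
    ⟨(⟨Measure.dirac x₀, inferInstance⟩ : ProbabilityMeasure X), by
      show 0 < Measure.dirac x₀ U; simp [hx₀]⟩
  obtain ⟨ρ, hρU, hρy : ρ.map hg.aemeasurable = ⟨Measure.dirac y, inferInstance⟩⟩ :=
    eq_univ_iff_forall.mp hdirac ⟨Measure.dirac y, inferInstance⟩
  have hae : ∀ᵐ x ∂(ρ : Measure X), g x = y := by
    have : ∀ᵐ y' ∂((ρ.map hg.aemeasurable : ProbabilityMeasure Y) : Measure Y), y' = y := by
      rw [hρy]; simp [ae_dirac_eq]
    rwa [ProbabilityMeasure.toMeasure_map, ae_map_iff hg.aemeasurable (measurableSet_eq)] at this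
  obtain ⟨x, hxU, hx⟩ :=
    Measure.exists_mem_of_measure_ne_zero_of_ae hρU.ne' (ae_restrict_of_ae hae)
  exact ⟨x, hxU, hx⟩

end MapOpens

section Dynamics

variable {Y Z : Type*}

theorem Function.Semiconj.nacomp {e : Y → Z} {G : ℕ → Y → Y} {F : ℕ → Z → Z}
    (h : ∀ n, Semiconj e (G n) (F n)) (n : ℕ) : Semiconj e (nacomp G n) (nacomp F n) := by
  induction n with
  | zero => exact Semiconj.id_right
  | succ n ih => exact (h n).comp_right ih

theorem naExact_iff_surjOnOpens [TopologicalSpace Y] (f : ℕ → Y → Y) :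
    NAExact f ↔ ∃ N, 1 ≤ N ∧ ∀ n, N ≤ n → SurjOnOpens (nacomp f n) :=
  exists_congr fun _ => and_congr_right fun _ =>
    ⟨fun h n hn U hU hUne => h U hU hUne n hn, fun h U hU hUne n hn => h n hn U hU hUne⟩

theorem NAExact.of_semiconj [TopologicalSpace Y] [TopologicalSpace Z] {e : Y → Z}
    (he : Continuous e) (he' : Surjective e) {G : ℕ → Y → Y} {F : ℕ → Z → Z}
    (h : ∀ n, Semiconj e (G n) (F n)) (hG : NAExact G) : NAExact F := by
  obtain ⟨N, hN, hGN⟩ := hG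
  refine ⟨N, hN, fun U hU hUne n hn => ?_⟩
  rw [← image_preimage_eq U he', ← image_comp, ← (Semiconj.nacomp h n).comp_eq, image_comp,
    hGN _ (hU.preimage he) (hUne.preimage he') n hn, image_univ_of_surjective he']

theorem Homeomorph.naExact_iff [TopologicalSpace Y] [TopologicalSpace Z] (e : Y ≃ₜ Z)
    {G : ℕ → Y → Y} {F : ℕ → Z → Z} (h : ∀ n, Semiconj e (G n) (F n)) :
    NAExact G ↔ NAExact F :=
  ⟨NAExact.of_semiconj e.continuous e.surjective h, NAExact.of_semiconj e.symm.continuous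
    e.symm.surjective fun n => (h n).inverse_left e.left_inv e.right_inv⟩

theorem continuous_nacomp [TopologicalSpace Y] {f : ℕ → Y → Y} (hf : ∀ n, Continuous (f n))
    (n : ℕ) : Continuous (nacomp f n) := by
  induction n with
  | zero => exact continuous_id
  | succ n ih => exact (hf n).comp ih

end Dynamics

theorem nacomp_probabilityMeasure_map {X : Type*} [TopologicalSpace X] [MeasurableSpace X]
    [BorelSpace X] {f : ℕ → X → X} (hf : ∀ n, Continuous (f n)) (n : ℕ) :
    nacomp (fun n (μ : ProbabilityMeasure X) => μ.map (hf n).aemeasurable) n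
      = fun μ => μ.map (continuous_nacomp hf n).aemeasurable := by
  induction n with
  | zero =>
    funext μ
    apply ProbabilityMeasure.toMeasure_injective
    exact Measure.map_id.symm
  | succ n ih =>
    funext μ
    apply ProbabilityMeasure.toMeasure_injective
    simp only [nacomp, Function.comp_apply, ih, ProbabilityMeasure.toMeasure_map]
    exact Measure.map_map (hf n).measurable (continuous_nacomp hf n).measurable

/-- `(X, f_{0,∞})` is topologically exact iff the induced system `(𝓜(X), f̂_{0,∞})` is
topologically exact. -/
theorem exact_iff_induced_exact
    {X : Type*} [MetricSpace X] [CompactSpace X] [MeasurableSpace X] [BorelSpace X]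
    (f : ℕ → X → X) (hf : ∀ n, Continuous (f n)) :
    NAExact f ↔ NAExact (fun n => inducedMap (f n) (hf n)) := by
  -- `inducedMap` is the push-forward read through the identity map from the weak topology
  -- to the Lévy–Prokhorov metric, a homeomorphism on a separable space
  have hconj : NAExact (fun n (μ : ProbabilityMeasure X) => μ.map (hf n).aemeasurable)
      ↔ NAExact fun n => inducedMap (f n) (hf n) :=
    LevyProkhorov.probabilityMeasureHomeomorph.naExact_iff fun n μ => rfl
  rw [← hconj, naExact_iff_surjOnOpens, naExact_iff_surjOnOpens]
  simp only [nacomp_probabilityMeasure_map hf]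
  exact exists_congr fun N => and_congr_right fun _ => forall₂_congr fun n _ =>
    ⟨fun h => h.probabilityMeasure_map (continuous_nacomp hf n),
      SurjOnOpens.of_probabilityMeasure_map (continuous_nacomp hf n)⟩
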